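/- arXiv:1811.09817 — 2 statements merged into one kernel-verified Lean document; each statement's English description precedes it below -/
import Mathlib

section
/- Consider the implicit Euler discretization of the coupled system: M(y_n)(y_n − y_{n−1})/τ + F(y_n) = Cᵀ z_n and E(z_n − z_{n−1})/τ + A z_n = B y_n, with y_0 = 0, z_0 = 0, where (E/τ + A) is invertible. Define quadrature weights (ω_n) by the power series expansion Cᵀ((1−ξ)/τ · E + A)^{-1} B = Σ_{n≥0} ω_n ξ^n (valid in a neighborhood of ξ = 0). Then for all n ≥ 1, the y-component satisfies M(y_n)(y_n − y_{n−1})/τ + F(y_n) = Σ_{k=0}^{n} ω_{n−k} y_k. -/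
open Matrix PowerSeries Finset

/-!
Writing `U = E/τ + A`, comparing coefficients in `((1 - ξ)E/τ + A) K(ξ) = 1` gives `U K₀ = 1`
(so `U` is invertible) and `U Kₖ₊₁ = (E/τ) Kₖ`, while the second equation of the scheme is the
recurrence `U zₖ₊₁ = (E/τ) zₖ + B yₖ₊₁`. Both are solved by the same discrete convolution, so
`zₙ = ∑ₖ Kₙ₋ₖ B yₖ`, and applying `Cᵀ` to the first equation gives the quadrature formula.
-/

namespace Matrix

variable {R : Type*} [CommRing R] {l n : Type*}

lemma map_coeff_succ_X_smul (S : Matrix l n R⟦X⟧) (k : ℕ) :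
    ((X : R⟦X⟧) • S).map (coeff (k + 1)) = S.map (coeff k) := by
  ext i j
  simp [coeff_succ_X_mul]

lemma map_coeff_zero_X_smul (S : Matrix l n R⟦X⟧) : ((X : R⟦X⟧) • S).map (coeff 0) = 0 := by
  ext i j
  simp

lemma one_sub_X_mul_C_smul_map_C_add_map_C (c : R) (E A : Matrix l n R) :
    ((1 - X) * C c) • E.map (C (R := R)) + A.map C =
      (c • E + A).map C - (X : R⟦X⟧) • (c • E).map C := by
  ext i j : 1
  simp only [add_apply, smul_apply, map_apply, sub_apply, smul_eq_mul, map_add, map_mul]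
  ring

variable [Fintype n]

lemma map_coeff_map_C_mul (N : Matrix l n R) (K : ℕ → Matrix n n R) (k : ℕ) :
    (N.map (C (R := R)) * Matrix.of fun i j => mk fun k => K k i j).map (coeff k) = N * K k := by
  ext i j
  simp [mul_apply, map_sum, coeff_C_mul]

variable [DecidableEq n]

lemma mul_coeff_of_one_sub_X_mul_C_smul_add_mul_eq_one {c : R} {E A : Matrix n n R}
    {K : ℕ → Matrix n n R}
    (hK : (((1 - X) * C c) • E.map (C (R := R)) + A.map C) *
      (Matrix.of fun i j => mk fun k => K k i j) = 1) :
    (c • E + A) * K 0 = 1 ∧ ∀ k, (c • E + A) * K (k + 1) = (c • E) * K k := by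
  rw [one_sub_X_mul_C_smul_map_C_add_map_C, sub_mul, smul_mul] at hK
  have hcoeff k := congrArg (Matrix.map · (coeff k)) hK
  refine ⟨?_, fun k => ?_⟩
  · simpa [-coeff_zero_eq_constantCoeff, Matrix.map_sub, map_coeff_map_C_mul,
      map_coeff_zero_X_smul] using hcoeff 0
  · have hone : (1 : Matrix n n R⟦X⟧).map (coeff (k + 1)) = 0 := by
      ext i j
      simp [one_apply, apply_ite]
    simpa [Matrix.map_sub, map_coeff_map_C_mul, map_coeff_succ_X_smul, hone, sub_eq_zero]
      using hcoeff (k + 1)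

lemma eq_sum_mulVec_of_recurrence {U P : Matrix n n R} {K : ℕ → Matrix n n R}
    (hK0 : U * K 0 = 1) (hKsucc : ∀ k, U * K (k + 1) = P * K k)
    {z w : ℕ → n → R} (hz0 : z 0 = K 0 *ᵥ w 0) (hz : ∀ k, U *ᵥ z (k + 1) = P *ᵥ z k + w (k + 1))
    (k : ℕ) : z k = ∑ j ∈ range (k + 1), K (k - j) *ᵥ w j := by
  have hK0' : K 0 * U = 1 := mul_eq_one_comm.mp hK0
  have hKsucc' (k : ℕ) : K (k + 1) = K 0 * P * K k := by
    rw [Matrix.mul_assoc, ← hKsucc, ← Matrix.mul_assoc, hK0', Matrix.one_mul]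
  induction k with
  | zero => simpa using hz0
  | succ k ih =>
    calc z (k + 1) = K 0 *ᵥ (U *ᵥ z (k + 1)) := by rw [mulVec_mulVec, hK0', one_mulVec]
      _ = (K 0 * P) *ᵥ z k + K 0 *ᵥ w (k + 1) := by rw [hz, mulVec_add, mulVec_mulVec]
      _ = ∑ j ∈ range (k + 2), K (k + 1 - j) *ᵥ w j := by
        rw [sum_range_succ, Nat.sub_self, ih, mulVec_sum]
        congr 1
        refine sum_congr rfl fun j hj => ?_
        rw [Nat.sub_add_comm (Nat.le_of_lt_succ (mem_range.mp hj)), hKsucc', mulVec_mulVec]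

end Matrix

theorem stmt2_general {m p : ℕ} (M : (Fin p → ℂ) → Matrix (Fin p) (Fin p) ℂ)
    (F : (Fin p → ℂ) → Fin p → ℂ)
    (E A : Matrix (Fin m) (Fin m) ℂ) (B C : Matrix (Fin m) (Fin p) ℂ)
    (τ : ℝ)
    (K : ℕ → Matrix (Fin m) (Fin m) ℂ)
    -- K is the formal power series inverse of ((1-ξ)/τ)·E + A
    (hK : (((1 - PowerSeries.X) * PowerSeries.C (R := ℂ) (τ : ℂ)⁻¹) •
            E.map (PowerSeries.C (R := ℂ)) + A.map (PowerSeries.C (R := ℂ))) *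
          (Matrix.of fun i j => PowerSeries.mk fun n => K n i j) = 1)
    (ω : ℕ → Matrix (Fin p) (Fin p) ℂ)
    (hω : ∀ n, ω n = Cᵀ * K n * B)
    (y : ℕ → Fin p → ℂ) (z : ℕ → Fin m → ℂ)
    (hy0 : y 0 = 0) (hz0 : z 0 = 0)
    (h1 : ∀ n : ℕ, 1 ≤ n →
      M (y n) *ᵥ (((τ : ℂ)⁻¹) • (y n - y (n - 1))) + F (y n) = Cᵀ *ᵥ z n)
    (h2 : ∀ n : ℕ, 1 ≤ n →
      ((τ : ℂ)⁻¹) • (E *ᵥ (z n - z (n - 1))) + A *ᵥ z n = B *ᵥ y n) :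
    ∀ n : ℕ, 1 ≤ n →
      M (y n) *ᵥ (((τ : ℂ)⁻¹) • (y n - y (n - 1))) + F (y n) =
        ∑ k ∈ range (n + 1), ω (n - k) *ᵥ y k := by
  obtain ⟨hK0, hKsucc⟩ := mul_coeff_of_one_sub_X_mul_C_smul_add_mul_eq_one hK
  have hz (k : ℕ) : z k = ∑ j ∈ range (k + 1), K (k - j) *ᵥ (B *ᵥ y j) := by
    refine eq_sum_mulVec_of_recurrence hK0 hKsucc (by simp [hz0, hy0]) (fun k => ?_) k
    have h := h2 (k + 1) k.succ_pos
    rw [Nat.add_sub_cancel] at h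
    rw [← h, add_mulVec, smul_mulVec, smul_mulVec, mulVec_sub]
    module
  intro n hn
  rw [h1 n hn, hz n, mulVec_sum]
  refine sum_congr rfl fun k _ => ?_
  rw [hω, mulVec_mulVec, mulVec_mulVec, Matrix.mul_assoc]

/-- implicit Euler discretization of the coupled system is equivalent to the
implicit Euler convolution quadrature method for the reduced problem.  The weights
`ω n = Cᵀ K n B` are the Taylor coefficients of `ξ ↦ Cᵀ((1-ξ)E/τ + A)⁻¹B`, encoded via the
formal power series inverse `K` of `(1-ξ)E/τ + A`. -/
theorem stmt2 {m p : ℕ} (M : (Fin p → ℂ) → Matrix (Fin p) (Fin p) ℂ)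
    (F : (Fin p → ℂ) → Fin p → ℂ)
    (E A : Matrix (Fin m) (Fin m) ℂ) (B C : Matrix (Fin m) (Fin p) ℂ)
    (τ : ℝ) (hτ : 0 < τ)
    (hinv : IsUnit (((τ : ℂ)⁻¹) • E + A))
    (K : ℕ → Matrix (Fin m) (Fin m) ℂ)
    -- K is the formal power series inverse of ((1-ξ)/τ)·E + A
    (hK : (((1 - PowerSeries.X) * PowerSeries.C (R := ℂ) (τ : ℂ)⁻¹) •
            E.map (PowerSeries.C (R := ℂ)) + A.map (PowerSeries.C (R := ℂ))) *
          (Matrix.of fun i j => PowerSeries.mk fun n => K n i j) = 1)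
    (ω : ℕ → Matrix (Fin p) (Fin p) ℂ)
    (hω : ∀ n, ω n = Cᵀ * K n * B)
    (y : ℕ → Fin p → ℂ) (z : ℕ → Fin m → ℂ)
    (hy0 : y 0 = 0) (hz0 : z 0 = 0)
    (h1 : ∀ n : ℕ, 1 ≤ n →
      M (y n) *ᵥ (((τ : ℂ)⁻¹) • (y n - y (n - 1))) + F (y n) = Cᵀ *ᵥ z n)
    (h2 : ∀ n : ℕ, 1 ≤ n →
      ((τ : ℂ)⁻¹) • (E *ᵥ (z n - z (n - 1))) + A *ᵥ z n = B *ᵥ y n) :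
    ∀ n : ℕ, 1 ≤ n →
      M (y n) *ᵥ (((τ : ℂ)⁻¹) • (y n - y (n - 1))) + F (y n) =
        ∑ k ∈ range (n + 1), ω (n - k) *ᵥ y k :=
  stmt2_general M F E A B C τ K hK ω hω y z hy0 hz0 h1 h2
end

section
/- Let E, A ∈ ℂ^{m×m} with E/τ + A invertible for τ > 0, and B ∈ ℂ^{m×p}, C ∈ ℂ^{m×p}. Given any sequence (y_n)_{n≥0} in ℂ^p with y_0 = 0, define z_n recursively by z_0 = 0 and (E/τ + A) z_n = B y_n + (E/τ) z_{n−1}. Simultaneously define ω_n ∈ ℂ^{p×p} as the Taylor coefficients of ξ ↦ Cᵀ((1−ξ)E/τ + A)^{-1}B at 0. Then Cᵀ z_n = Σ_{k=0}^n ω_{n−k} y_k for all n ≥ 0. -/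
open Matrix PowerSeries Finset

/-!
With `M = E/τ + A`, the generating function of `K` inverts the pencil `M - ξ E/τ`; comparing
coefficients gives `M K₀ = 1` and `M K_{n+1} = (E/τ) K_n`. Hence the discrete convolution
`w_n = ∑ K_{n-k} B y_k` satisfies the same implicit Euler recursion as `z`, and since `M` has the
left inverse `K₀` this recursion has only one solution, so `z = w`; applying `Cᵀ` gives the claim.
-/

section Pencil

variable {R : Type*} [CommSemiring R] {ι κ : Type*}

theorem Matrix.map_coeff_succ_one [DecidableEq ι] (n : ℕ) :
    (1 : Matrix ι ι R⟦X⟧).map (coeff (n + 1)) = 0 := by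
  ext i j
  by_cases h : i = j <;> simp [h, coeff_one]

variable [Fintype ι]

theorem Matrix.map_coeff_zero_pencil_mul (M N : Matrix ι ι R) (Q : Matrix ι κ R⟦X⟧) :
    ((M.map C + (X : R⟦X⟧) • N.map C) * Q).map (coeff 0) = M * Q.map (coeff 0) := by
  ext i j
  simp [Matrix.mul_apply, map_sum, add_mul, mul_assoc]

theorem Matrix.map_coeff_succ_pencil_mul (M N : Matrix ι ι R) (Q : Matrix ι κ R⟦X⟧) (n : ℕ) :
    ((M.map C + (X : R⟦X⟧) • N.map C) * Q).map (coeff (n + 1)) =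
      M * Q.map (coeff (n + 1)) + N * Q.map (coeff n) := by
  ext i j
  simp [Matrix.mul_apply, map_sum, add_mul, coeff_C_mul, mul_assoc, coeff_succ_X_mul,
    Finset.sum_add_distrib]

end Pencil

section Convolution

variable {R : Type*} [CommRing R] {ι : Type*} [Fintype ι] [DecidableEq ι]

def Matrix.convMulVec (K : ℕ → Matrix ι ι R) (v : ℕ → ι → R) (n : ℕ) : ι → R :=
  ∑ k ∈ range (n + 1), K (n - k) *ᵥ v k

theorem Matrix.mulVec_convMulVec_succ {M G : Matrix ι ι R} {K : ℕ → Matrix ι ι R}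
    (hK0 : M * K 0 = 1) (hK : ∀ n, M * K (n + 1) = G * K n) (v : ℕ → ι → R) (n : ℕ) :
    M *ᵥ convMulVec K v (n + 1) = v (n + 1) + G *ᵥ convMulVec K v n := by
  rw [convMulVec, sum_range_succ, mulVec_add, Nat.sub_self, mulVec_mulVec, hK0, one_mulVec,
    add_comm, convMulVec, mulVec_sum, mulVec_sum]
  congr 1
  refine sum_congr rfl fun k hk => ?_
  rw [show n + 1 - k = n - k + 1 by have := mem_range.mp hk; omega, mulVec_mulVec, hK,
    ← mulVec_mulVec]

theorem Matrix.eq_convMulVec_of_recurrence {M G : Matrix ι ι R} {K : ℕ → Matrix ι ι R}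
    (hK0 : M * K 0 = 1) (hK : ∀ n, M * K (n + 1) = G * K n) {v : ℕ → ι → R} {z : ℕ → ι → R}
    (hz0 : z 0 = K 0 *ᵥ v 0) (hz : ∀ n, M *ᵥ z (n + 1) = v (n + 1) + G *ᵥ z n) :
    ∀ n, z n = convMulVec K v n := by
  have hinj : Function.Injective (M *ᵥ ·) := fun a b hab => by
    simpa [mulVec_mulVec, mul_eq_one_comm.mp hK0] using congrArg (K 0 *ᵥ ·) hab
  intro n
  induction n with
  | zero => simp [hz0, convMulVec]
  | succ n ih => exact hinj (by simp only [hz, mulVec_convMulVec_succ hK0 hK, ih])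

end Convolution

theorem stmt14_general {m p : ℕ} (E A : Matrix (Fin m) (Fin m) ℂ) (B C : Matrix (Fin m) (Fin p) ℂ)
    (τ : ℝ)
    (K : ℕ → Matrix (Fin m) (Fin m) ℂ)
    (hK : (((1 - PowerSeries.X) * PowerSeries.C (R := ℂ) (τ : ℂ)⁻¹) •
            E.map (PowerSeries.C (R := ℂ)) + A.map (PowerSeries.C (R := ℂ))) *
          (Matrix.of fun i j => PowerSeries.mk fun n => K n i j) = 1)
    (ω : ℕ → Matrix (Fin p) (Fin p) ℂ)
    (hω : ∀ n, ω n = Cᵀ * K n * B)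
    (y : ℕ → Fin p → ℂ) (z : ℕ → Fin m → ℂ)
    (hy0 : y 0 = 0) (hz0 : z 0 = 0)
    (hrec : ∀ n : ℕ, 1 ≤ n →
      (((τ : ℂ)⁻¹) • E + A) *ᵥ z n = B *ᵥ y n + ((τ : ℂ)⁻¹) • (E *ᵥ z (n - 1))) :
    ∀ n : ℕ, Cᵀ *ᵥ z n = ∑ k ∈ range (n + 1), ω (n - k) *ᵥ y k := by
  set M := (τ : ℂ)⁻¹ • E + A
  set Q : Matrix (Fin m) (Fin m) ℂ⟦X⟧ := Matrix.of fun i j => PowerSeries.mk fun n => K n i j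
  have hpencil : ((1 - X) * PowerSeries.C (R := ℂ) (τ : ℂ)⁻¹) • E.map PowerSeries.C +
      A.map PowerSeries.C = M.map PowerSeries.C + (X : ℂ⟦X⟧) • (-((τ : ℂ)⁻¹ • E)).map PowerSeries.C := by
    refine Matrix.ext fun i j => ?_
    simp only [M, Matrix.add_apply, Matrix.smul_apply, map_apply, Matrix.neg_apply, smul_eq_mul,
      map_add, map_neg, map_mul]
    ring
  have hQ : ∀ n, Q.map (coeff n) = K n := fun n => by ext; simp [Q]
  rw [hpencil] at hK
  have hK0 : M * K 0 = 1 := by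
    have := congrArg (·.map (coeff 0)) hK
    rwa [map_coeff_zero_pencil_mul, hQ, Matrix.map_one _ (map_zero _) (by simp)] at this
  have hKsucc : ∀ n, M * K (n + 1) = ((τ : ℂ)⁻¹ • E) * K n := fun n => by
    have := congrArg (·.map (coeff (n + 1))) hK
    rw [map_coeff_succ_pencil_mul, hQ, hQ, map_coeff_succ_one, neg_mul] at this
    exact add_neg_eq_zero.mp this
  have hz : ∀ n, z n = convMulVec K (fun k => B *ᵥ y k) n :=
    eq_convMulVec_of_recurrence hK0 hKsucc (by simp [hz0, hy0]) fun n => by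
      simpa [smul_mulVec] using hrec (n + 1) (Nat.le_add_left 1 n)
  intro n
  rw [hz, convMulVec, mulVec_sum]
  exact sum_congr rfl fun k _ => by simp [hω, mulVec_mulVec, Matrix.mul_assoc]

/-- the implicit Euler solution of the linear subsystem reproduces the
convolution quadrature sums with weights `ω n = Cᵀ K n B`, where `Σ K_n ξ^n` is the
formal power series inverse of `(1-ξ)E/τ + A`. -/
theorem stmt14 {m p : ℕ} (E A : Matrix (Fin m) (Fin m) ℂ) (B C : Matrix (Fin m) (Fin p) ℂ)
    (τ : ℝ) (hτ : 0 < τ)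
    (hinv : IsUnit (((τ : ℂ)⁻¹) • E + A))
    (K : ℕ → Matrix (Fin m) (Fin m) ℂ)
    (hK : (((1 - PowerSeries.X) * PowerSeries.C (R := ℂ) (τ : ℂ)⁻¹) •
            E.map (PowerSeries.C (R := ℂ)) + A.map (PowerSeries.C (R := ℂ))) *
          (Matrix.of fun i j => PowerSeries.mk fun n => K n i j) = 1)
    (ω : ℕ → Matrix (Fin p) (Fin p) ℂ)
    (hω : ∀ n, ω n = Cᵀ * K n * B)
    (y : ℕ → Fin p → ℂ) (z : ℕ → Fin m → ℂ)
    (hy0 : y 0 = 0) (hz0 : z 0 = 0)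
    (hrec : ∀ n : ℕ, 1 ≤ n →
      (((τ : ℂ)⁻¹) • E + A) *ᵥ z n = B *ᵥ y n + ((τ : ℂ)⁻¹) • (E *ᵥ z (n - 1))) :
    ∀ n : ℕ, Cᵀ *ᵥ z n = ∑ k ∈ range (n + 1), ω (n - k) *ᵥ y k :=
  stmt14_general E A B C τ K hK ω hω y z hy0 hz0 hrec
end
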